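/- arXiv:2508.20521 — 7 statements merged into one kernel-verified Lean document; each statement's English description precedes it below -/
import Mathlib

section
/- For every positive integer n not divisible by 3, the cycle C_n of length n admits no proper conflict-free 3-coloring. -/
open SimpleGraph

/-- A coloring is proper conflict-free: proper, and every non-isolated vertex has a color
appearing exactly once among its neighbors. -/
def IsPCF {V : Type*} (G : SimpleGraph V) (φ : V → ℕ) : Prop :=
  (∀ ⦃u v : V⦄, G.Adj u v → φ u ≠ φ v) ∧
  ∀ v : V, (∃ u, G.Adj v u) → ∃ c : ℕ, ∃! u : V, G.Adj v u ∧ φ u = c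

/-- A proper conflict-free coloring from the lists `L`. -/
def IsPCFList {V : Type*} (G : SimpleGraph V) (L : V → Finset ℕ) (φ : V → ℕ) : Prop :=
  (∀ v, φ v ∈ L v) ∧ IsPCF G φ

/-- Degree of a vertex, as the cardinality of its neighbor set. -/
noncomputable def gdeg {V : Type*} (G : SimpleGraph V) (v : V) : ℕ := (G.neighborSet v).ncard

open scoped Fin.CommRing in
private theorem no_pcf_cycle_aux (n : ℕ) (hn : 3 ≤ n) (h3 : ¬ (3 ∣ n))
    (φ : Fin n → ℕ) (hlt : ∀ v, φ v < 3)
    (hprop : ∀ ⦃u v : Fin n⦄, (cycleGraph n).Adj u v → φ u ≠ φ v)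
    (hcf : ∀ v : Fin n, (∃ u, (cycleGraph n).Adj v u) →
      ∃ c : ℕ, ∃! u : Fin n, (cycleGraph n).Adj v u ∧ φ u = c) : False := by
  obtain ⟨m, rfl⟩ : ∃ m, n = m + 3 := ⟨n - 3, by omega⟩
  have h2 : (2 : Fin (m + 3)) ≠ 0 := by
    simp [Fin.ext_iff, Nat.mod_eq_of_lt (show 2 < m + 3 by omega)]
  have hadj : ∀ v : Fin (m + 3), (cycleGraph (m + 3)).Adj v (v + 1) := by
    intro v
    have : (m + 3) = (m + 1) + 2 := by omega
    rw [this] at *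
    rw [cycleGraph_adj]
    right; ring
  have hadj' : ∀ v : Fin (m + 3), (cycleGraph (m + 3)).Adj v (v - 1) := by
    intro v
    have : (m + 3) = (m + 1) + 2 := by omega
    rw [this] at *
    rw [cycleGraph_adj]
    left; ring
  have hne : ∀ v : Fin (m + 3), v - 1 ≠ v + 1 := by
    intro v h
    apply h2
    have : v + 1 - (v - 1) = 2 := by ring
    rw [← h] at this
    simpa using this.symm
  -- neighbors are exactly v-1, v+1
  have hmem : ∀ v u : Fin (m + 3), (cycleGraph (m + 3)).Adj v u → u = v - 1 ∨ u = v + 1 := by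
    intro v u h
    have : (m + 3) = (m + 1) + 2 := by omega
    rw [this] at *
    rw [cycleGraph_adj] at h
    rcases h with h | h
    · left; linear_combination -h
    · right; linear_combination h
  -- the two neighbors get distinct colors
  have hcf2 : ∀ v : Fin (m + 3), φ (v - 1) ≠ φ (v + 1) := by
    intro v heq
    obtain ⟨c, u, ⟨hu1, hu2⟩, huniq⟩ := hcf v ⟨v + 1, hadj v⟩
    have hc : c = φ (v + 1) := by
      rcases hmem v u hu1 with rfl | rfl
      · rw [← hu2, heq]
      · rw [← hu2]
    apply hne v
    have e1 := huniq (v - 1) ⟨hadj' v, by rw [heq, ← hc]⟩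
    have e2 := huniq (v + 1) ⟨hadj v, hc.symm⟩
    rw [e1, e2]
  -- three consecutive colors sum to 3
  have hsum : ∀ v : Fin (m + 3), φ (v - 1) + φ v + φ (v + 1) = 3 := by
    intro v
    have h1 := hprop (hadj v)
    have h2' := hprop (hadj' v)
    have h3' := hcf2 v
    have := hlt (v - 1); have := hlt v; have := hlt (v + 1)
    omega
  -- period 3
  have hper : ∀ v : Fin (m + 3), φ (v + 3) = φ v := by
    intro v
    have e1 := hsum (v + 1)
    have e2 := hsum (v + 2)
    have a1 : v + 1 - 1 = v := by ring
    have a2 : v + 1 + 1 = v + 2 := by ring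
    have a3 : v + 2 - 1 = v + 1 := by ring
    have a4 : v + 2 + 1 = v + 3 := by ring
    rw [a1, a2] at e1
    rw [a3, a4] at e2
    omega
  have key : ∀ (k : ℕ) (v : Fin (m + 3)), φ (v + (3 * k : ℕ)) = φ v := by
    intro k
    induction k with
    | zero => simp
    | succ k ih =>
      intro v
      have : v + ((3 * (k + 1) : ℕ) : Fin (m + 3)) = (v + (3 * k : ℕ)) + 3 := by
        push_cast; ring
      rw [this, hper, ih]
  -- 3 coprime to n, get inverse
  have hcop : Nat.Coprime 3 (m + 3) := (Nat.Prime.coprime_iff_not_dvd (by norm_num)).mpr h3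
  obtain ⟨k, -, hk⟩ := Nat.exists_mul_mod_eq_one_of_coprime hcop (by omega)
  have hone : ((3 * k : ℕ) : Fin (m + 3)) = 1 := by
    have : ((3 * k : ℕ) : Fin (m + 3)) = ((3 * k % (m + 3) : ℕ) : Fin (m + 3)) := by
      conv_lhs => rw [← Nat.mod_add_div (3 * k) (m + 3)]
      rw [Nat.cast_add, Nat.cast_mul, Fin.natCast_self, zero_mul, add_zero]
    rw [this, hk]; simp
  have := key k 0
  rw [hone] at this
  exact hprop (hadj 0) this.symm

/-- if 3 ∤ n (n ≥ 3), then Cₙ has no proper conflict-free 3-coloring. -/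
theorem no_pcf_three_coloring_of_cycle (n : ℕ) (hn : 3 ≤ n) (h3 : ¬ (3 ∣ n)) :
    ¬ ∃ φ : Fin n → ℕ, (∀ v, φ v < 3) ∧ IsPCF (SimpleGraph.cycleGraph n) φ := by
  rintro ⟨φ, hlt, hprop, hcf⟩
  exact no_pcf_cycle_aux n hn h3 φ hlt hprop hcf
end

section
/- Let C = u_1 u_2 ⋯ u_ℓ u_1 be a cycle of length ℓ ≥ 6, and let L be a list assignment with |L(u_i)| ≥ 4 for all i. If not all lists are equal (i.e., L(u_i) ≠ L(u_j) for some i ≠ j), then C admits a proper conflict-free L-coloring. -/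
open SimpleGraph
open scoped Fin.NatCast Fin.CommRing

noncomputable def pickc (s t : Finset ℕ) : ℕ :=
  if h : (s \ t).Nonempty then h.choose else 0

lemma pickc_spec {s t : Finset ℕ} (h4 : 4 ≤ s.card) (h3 : t.card ≤ 3) :
    pickc s t ∈ s ∧ pickc s t ∉ t := by
  have hne : (s \ t).Nonempty := by
    rw [← Finset.card_pos]
    have := Finset.le_card_sdiff t s
    omega
  have := hne.choose_spec
  rw [Finset.mem_sdiff] at this
  simpa [pickc, hne] using this

lemma card_triple_le (x y z : ℕ) : ({x, y, z} : Finset ℕ).card ≤ 3 := by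
  refine le_trans (Finset.card_insert_le _ _) ?_
  have := Finset.card_insert_le y ({z} : Finset ℕ)
  simp at this ⊢
  omega

lemma core (ℓ : ℕ) [NeZero ℓ] (hℓ : 6 ≤ ℓ) (L : Fin ℓ → Finset ℕ)
    (hL : ∀ i, 4 ≤ (L i).card) (a : ℕ) (ha0 : a ∈ L 0) (ha1 : a ∉ L 1) :
    ∃ φ : Fin ℓ → ℕ, (∀ i, φ i ∈ L i) ∧ (∀ i, φ i ≠ φ (i + 1)) ∧ (∀ i, φ i ≠ φ (i + 2)) := by
  classical
  set L' : ℕ → Finset ℕ := fun n => L (n : Fin ℓ) with hL'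
  have hL'card : ∀ n, 4 ≤ (L' n).card := fun n => hL _
  set f : ℕ → ℕ × ℕ :=
    fun n => Nat.rec (motive := fun _ => ℕ × ℕ) (a, a)
      (fun n p => (p.2, pickc (L' (n + 2)) {p.1, p.2, a})) n with hf
  set g : ℕ → ℕ := fun n => (f n).1 with hg
  have hg0 : g 0 = a := rfl
  have hgrec : ∀ n, g (n + 2) = pickc (L' (n + 2)) {g n, g (n + 1), a} := fun n => rfl
  have hgspec : ∀ n, g (n + 2) ∈ L' (n + 2) ∧
      g (n + 2) ≠ g n ∧ g (n + 2) ≠ g (n + 1) ∧ g (n + 2) ≠ a := by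
    intro n
    rw [hgrec]
    have := pickc_spec (hL'card (n + 2)) (card_triple_le (g n) (g (n+1)) a)
    simp only [Finset.mem_insert, Finset.mem_singleton, not_or] at this
    tauto
  set b : ℕ := pickc (L 1) {g 2, g 3, g (ℓ - 1)} with hb
  have hbspec : b ∈ L 1 ∧ b ∉ ({g 2, g 3, g (ℓ - 1)} : Finset ℕ) :=
    pickc_spec (hL 1) (card_triple_le _ _ _)
  simp only [Finset.mem_insert, Finset.mem_singleton, not_or] at hbspec
  obtain ⟨hb1, hb2, hb3, hb4⟩ := hbspec
  have hba : b ≠ a := fun h => ha1 (h ▸ hb1)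
  set φ : Fin ℓ → ℕ := fun i => if i.val = 1 then b else g i.val with hφ
  -- basic val facts
  have hv0 : ((0 : Fin ℓ) : ℕ) = 0 := rfl
  have hv1 : ((1 : Fin ℓ) : ℕ) = 1 := by rw [Fin.val_one']; exact Nat.mod_eq_of_lt (by omega)
  have hv2 : ((2 : Fin ℓ) : ℕ) = 2 := by
    have h21 : (2 : Fin ℓ) = (1 : Fin ℓ) + 1 := by norm_num
    rw [h21, Fin.add_def, hv1]
    exact Nat.mod_eq_of_lt (by omega)
  have hadd1 : ∀ i : Fin ℓ, ((i + 1 : Fin ℓ) : ℕ) = (i.val + 1) % ℓ := by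
    intro i; rw [Fin.add_def, hv1]
  have hadd2 : ∀ i : Fin ℓ, ((i + 2 : Fin ℓ) : ℕ) = (i.val + 2) % ℓ := by
    intro i; rw [Fin.add_def, hv2]
  refine ⟨φ, ?_, ?_, ?_⟩
  · intro i
    rcases Nat.lt_or_ge i.val 2 with h | h
    · interval_cases hi : i.val
      · have hi0 : i = 0 := by rw [Fin.ext_iff, hv0, hi]
        simp only [hφ, hi]
        rw [hi0]
        exact ha0
      · have hi1 : i = 1 := by rw [Fin.ext_iff, hv1, hi]
        simp only [hφ, hi]
        rw [hi1]
        exact hb1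
    · obtain ⟨n, hn⟩ : ∃ n, i.val = n + 2 := ⟨i.val - 2, by omega⟩
      have : φ i = g (n + 2) := by simp only [hφ, hn]; rw [if_neg (by omega)]
      rw [this]
      have hcast : ((n + 2 : ℕ) : Fin ℓ) = i := by
        rw [Fin.ext_iff, Fin.val_natCast, ← hn, Nat.mod_eq_of_lt i.isLt]
      have hmem : g (n + 2) ∈ L ((n + 2 : ℕ) : Fin ℓ) := (hgspec n).1
      rwa [hcast] at hmem
  · -- φ i ≠ φ (i+1)
    intro i
    have hlt := i.isLt
    rcases Nat.lt_or_ge (i.val + 1) ℓ with h | h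
    · have hj : ((i + 1 : Fin ℓ) : ℕ) = i.val + 1 := by
        rw [hadd1]; exact Nat.mod_eq_of_lt h
      rcases Nat.lt_or_ge i.val 2 with h2 | h2
      · interval_cases hi : i.val
        · -- v = 0 : a ≠ b
          have e1 : φ i = a := by simp only [hφ]; rw [if_neg (by omega), hi]; exact hg0
          have e2 : φ (i + 1) = b := by simp only [hφ]; rw [if_pos (by omega)]
          rw [e1, e2]; exact hba.symm
        · -- v = 1 : b ≠ g 2
          have e1 : φ i = b := by simp only [hφ]; rw [if_pos hi]
          have e2 : φ (i + 1) = g 2 := by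
            simp only [hφ]; rw [if_neg (by omega), hj]; norm_num
          rw [e1, e2]; exact hb2
      · obtain ⟨n, hn⟩ : ∃ n, i.val = n + 2 := ⟨i.val - 2, by omega⟩
        have e1 : φ i = g (n + 2) := by simp only [hφ]; rw [if_neg (by omega), hn]
        have e2 : φ (i + 1) = g (n + 3) := by
          simp only [hφ]; rw [if_neg (by omega), hj, hn]
        rw [e1, e2]
        exact ((hgspec (n + 1)).2.2.1).symm
    · -- i.val = ℓ - 1
      have hv : i.val = ℓ - 1 := by omega
      have hj : ((i + 1 : Fin ℓ) : ℕ) = 0 := by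
        rw [hadd1, hv]
        have : (ℓ - 1 + 1) = ℓ := by omega
        rw [this, Nat.mod_self]
      have e1 : φ i = g (ℓ - 3 + 2) := by
        simp only [hφ]; rw [if_neg (by omega), hv]
        have hx : ℓ - 1 = ℓ - 3 + 2 := by omega
        rw [hx]
      have e2 : φ (i + 1) = a := by simp only [hφ]; rw [if_neg (by omega), hj]; exact hg0
      rw [e1, e2]
      exact (hgspec (ℓ - 3)).2.2.2
  · -- φ i ≠ φ (i+2)
    intro i
    have hlt := i.isLt
    rcases Nat.lt_or_ge (i.val + 2) ℓ with h | h
    · have hj : ((i + 2 : Fin ℓ) : ℕ) = i.val + 2 := by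
        rw [hadd2]; exact Nat.mod_eq_of_lt h
      rcases Nat.lt_or_ge i.val 2 with h2 | h2
      · interval_cases hi : i.val
        · have e1 : φ i = a := by simp only [hφ]; rw [if_neg (by omega), hi]; exact hg0
          have e2 : φ (i + 2) = g (0 + 2) := by
            simp only [hφ]; rw [if_neg (by omega), hj]
          rw [e1, e2]
          exact ((hgspec 0).2.2.2).symm
        · have e1 : φ i = b := by simp only [hφ]; rw [if_pos hi]
          have e2 : φ (i + 2) = g 3 := by
            simp only [hφ]; rw [if_neg (by omega), hj]; norm_num
          rw [e1, e2]; exact hb3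
      · obtain ⟨n, hn⟩ : ∃ n, i.val = n + 2 := ⟨i.val - 2, by omega⟩
        have e1 : φ i = g (n + 2) := by simp only [hφ]; rw [if_neg (by omega), hn]
        have e2 : φ (i + 2) = g (n + 2 + 2) := by
          simp only [hφ]; rw [if_neg (by omega), hj, hn]
        rw [e1, e2]
        exact ((hgspec (n + 2)).2.1).symm
    · rcases Nat.lt_or_ge (i.val + 1) ℓ with h' | h'
      · -- i.val = ℓ - 2
        have hv : i.val = ℓ - 2 := by omega
        have hj : ((i + 2 : Fin ℓ) : ℕ) = 0 := by
          rw [hadd2, hv]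
          have : (ℓ - 2 + 2) = ℓ := by omega
          rw [this, Nat.mod_self]
        have e1 : φ i = g (ℓ - 4 + 2) := by
          simp only [hφ]; rw [if_neg (by omega), hv]
          have hx : ℓ - 2 = ℓ - 4 + 2 := by omega
          rw [hx]
        have e2 : φ (i + 2) = a := by simp only [hφ]; rw [if_neg (by omega), hj]; exact hg0
        rw [e1, e2]
        exact (hgspec (ℓ - 4)).2.2.2
      · -- i.val = ℓ - 1
        have hv : i.val = ℓ - 1 := by omega
        have hj : ((i + 2 : Fin ℓ) : ℕ) = 1 := by
          rw [hadd2, hv]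
          have : (ℓ - 1 + 2) = ℓ + 1 := by omega
          rw [this, Nat.add_mod_left]
          exact Nat.mod_eq_of_lt (by omega)
        have e1 : φ i = g (ℓ - 1) := by simp only [hφ]; rw [if_neg (by omega), hv]
        have e2 : φ (i + 2) = b := by simp only [hφ]; rw [if_pos hj]
        rw [e1, e2]
        exact fun hh => hb4 hh.symm

lemma pcf_of_conds (ℓ : ℕ) [NeZero ℓ] (hℓ : 6 ≤ ℓ) (L : Fin ℓ → Finset ℕ) (φ : Fin ℓ → ℕ)
    (h1 : ∀ i, φ i ∈ L i) (h2 : ∀ i, φ i ≠ φ (i + 1)) (h3 : ∀ i, φ i ≠ φ (i + 2)) :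
    IsPCFList (SimpleGraph.cycleGraph ℓ) L φ := by
  have hone : ((1 : Fin ℓ) : ℕ) = 1 := by
    rw [Fin.val_one']
    exact Nat.mod_eq_of_lt (by omega)
  have hadj : ∀ u v : Fin ℓ, (cycleGraph ℓ).Adj u v ↔ (u = v + 1 ∨ v = u + 1) := by
    intro u v
    rw [cycleGraph_adj']
    have e1 : ((u - v : Fin ℓ) : ℕ) = 1 ↔ u = v + 1 := by
      rw [← hone, Fin.val_eq_val, sub_eq_iff_eq_add, add_comm]
    have e2 : ((v - u : Fin ℓ) : ℕ) = 1 ↔ v = u + 1 := by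
      rw [← hone, Fin.val_eq_val, sub_eq_iff_eq_add, add_comm]
    rw [e1, e2]
  refine ⟨h1, ?_, ?_⟩
  · intro u v huv
    rcases (hadj u v).1 huv with h | h
    · subst h; exact (h2 v).symm
    · subst h; exact h2 u
  · intro v _
    refine ⟨φ (v + 1), ⟨v + 1, ⟨(hadj v (v+1)).2 (Or.inr rfl), rfl⟩, ?_⟩⟩
    rintro u ⟨hu, hc⟩
    rcases (hadj v u).1 hu with h | h
    · exfalso
      have : v + 1 = u + 2 := by rw [h]; ring
      rw [this] at hc
      exact h3 u hc
    · exact h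

/-- a cycle of length ℓ ≥ 6 with lists of size ≥ 4, not all equal, has a
proper conflict-free list coloring. -/
theorem pcf_cycle_lists_not_all_equal (ℓ : ℕ) (hℓ : 6 ≤ ℓ)
    (L : Fin ℓ → Finset ℕ) (hL : ∀ i, 4 ≤ (L i).card)
    (hne : ∃ i j : Fin ℓ, L i ≠ L j) :
    ∃ φ : Fin ℓ → ℕ, IsPCFList (SimpleGraph.cycleGraph ℓ) L φ := by
  haveI : NeZero ℓ := ⟨by omega⟩
  have hv1 : ((1 : Fin ℓ) : ℕ) = 1 := by
    rw [Fin.val_one']; exact Nat.mod_eq_of_lt (by omega)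
  have hk : ∃ k : Fin ℓ, L k ≠ L (k + 1) := by
    by_contra hc
    push_neg at hc
    have hall : ∀ n (hn : n < ℓ), L ⟨n, hn⟩ = L ⟨0, by omega⟩ := by
      intro n
      induction n with
      | zero => intro _; rfl
      | succ m ih =>
        intro hn
        have hm : m < ℓ := by omega
        have hstep : (⟨m, hm⟩ : Fin ℓ) + 1 = ⟨m + 1, hn⟩ := by
          rw [Fin.ext_iff, Fin.add_def, hv1]; exact Nat.mod_eq_of_lt hn
        rw [← hstep, ← hc ⟨m, hm⟩, ih hm]
    obtain ⟨i, j, hij⟩ := hne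
    apply hij
    have e1 := hall i.val i.isLt
    have e2 := hall j.val j.isLt
    rw [Fin.eta] at e1 e2
    rw [e1, e2]
  obtain ⟨k, hk⟩ := hk
  by_cases hcase : ∃ a, a ∈ L k ∧ a ∉ L (k + 1)
  · obtain ⟨a, ha1, ha2⟩ := hcase
    set L2 : Fin ℓ → Finset ℕ := fun i => L (i + k) with hL2
    have h0 : L2 0 = L k := by rw [hL2]; simp
    have h1 : L2 1 = L (k + 1) := by rw [hL2]; simp [add_comm]
    obtain ⟨ψ, m1, m2, m3⟩ :=
      core ℓ hℓ L2 (fun i => hL _) a (h0 ▸ ha1) (h1 ▸ ha2)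
    refine ⟨fun j => ψ (j - k), pcf_of_conds ℓ hℓ L _ ?_ ?_ ?_⟩
    · intro i
      have := m1 (i - k)
      rw [hL2] at this
      simpa [sub_add_cancel] using this
    · intro i
      have := m2 (i - k)
      have e : i - k + 1 = (i + 1) - k := by ring
      rwa [e] at this
    · intro i
      have := m3 (i - k)
      have e : i - k + 2 = (i + 2) - k := by ring
      rwa [e] at this
  · push_neg at hcase
    have hsub : L k ⊆ L (k + 1) := fun a ha => hcase a ha
    have : ∃ a, a ∈ L (k + 1) ∧ a ∉ L k := by
      by_contra h
      push_neg at h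
      exact hk (Finset.Subset.antisymm hsub h)
    obtain ⟨a, ha1, ha2⟩ := this
    set c : Fin ℓ := k + 1 with hc
    set L2 : Fin ℓ → Finset ℕ := fun i => L (c - i) with hL2
    have h0 : L2 0 = L (k + 1) := by rw [hL2]; simp [hc]
    have h1 : L2 1 = L k := by
      rw [hL2]
      have : c - 1 = k := by rw [hc]; ring
      simp [this]
    obtain ⟨ψ, m1, m2, m3⟩ :=
      core ℓ hℓ L2 (fun i => hL _) a (h0 ▸ ha1) (h1 ▸ ha2)
    refine ⟨fun j => ψ (c - j), pcf_of_conds ℓ hℓ L _ ?_ ?_ ?_⟩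
    · intro i
      have := m1 (c - i)
      rw [hL2] at this
      simpa [sub_sub_cancel] using this
    · intro i
      have := m2 (c - (i + 1))
      have e : c - (i + 1) + 1 = c - i := by ring
      rw [e] at this
      exact this.symm
    · intro i
      have := m3 (c - (i + 2))
      have e : c - (i + 2) + 2 = c - i := by ring
      rw [e] at this
      exact this.symm
end

section
/- Let G be a graph, v a vertex of G with degree 1, and L a list assignment with |L(w)| ≥ d_G(w)+2 for every vertex w. If G − v admits a proper conflict-free L-coloring, then so does G. -/
open SimpleGraph

/-- if v has degree 1 and G − v has a proper conflict-free L-coloring,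
then so does G (lists of size ≥ degree + 2). -/
theorem pcf_extend_degree_one {V : Type*} [Fintype V] (G : SimpleGraph V)
    (v : V) (hv : gdeg G v = 1) (L : V → Finset ℕ)
    (hL : ∀ w, gdeg G w + 2 ≤ (L w).card)
    (h : ∃ φ : {w : V // w ≠ v} → ℕ,
      IsPCFList (G.induce {w : V | w ≠ v}) (fun w => L w.1) φ) :
    ∃ φ : V → ℕ, IsPCFList G L φ := by
  classical
  obtain ⟨φ, hφL, hφp, hφc⟩ := h
  obtain ⟨u, hu⟩ : ∃ u, G.neighborSet v = {u} := Set.ncard_eq_one.mp hv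
  have hadj : G.Adj v u := by rw [← SimpleGraph.mem_neighborSet, hu]; exact rfl
  have huv : u ≠ v := (G.ne_of_adj hadj).symm
  have honly : ∀ x, G.Adj v x → x = u := fun x hx => by
    have : x ∈ G.neighborSet v := hx
    rwa [hu, Set.mem_singleton_iff] at this
  obtain ⟨c, hcprop⟩ : ∃ c : ℕ, (∃ x, (G.induce {w : V | w ≠ v}).Adj ⟨u, huv⟩ x) →
      ∃! x, (G.induce {w : V | w ≠ v}).Adj ⟨u, huv⟩ x ∧ φ x = c := by
    by_cases hiso : ∃ x, (G.induce {w : V | w ≠ v}).Adj ⟨u, huv⟩ x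
    · obtain ⟨c, hc⟩ := hφc ⟨u, huv⟩ hiso
      exact ⟨c, fun _ => hc⟩
    · exact ⟨0, fun h' => absurd h' hiso⟩
  have hcard : ({φ ⟨u, huv⟩, c} : Finset ℕ).card < (L v).card := by
    have h3 : 3 ≤ (L v).card := by
      have := hL v; unfold gdeg at this; rw [hu, Set.ncard_singleton] at this; omega
    have h2 : ({φ ⟨u, huv⟩, c} : Finset ℕ).card ≤ 2 :=
      (Finset.card_insert_le _ _).trans (by simp)
    omega
  obtain ⟨cv, hcv⟩ : ((L v) \ {φ ⟨u, huv⟩, c}).Nonempty := by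
    rw [← Finset.card_pos]
    have := Finset.le_card_sdiff ({φ ⟨u, huv⟩, c} : Finset ℕ) (L v)
    omega
  rw [Finset.mem_sdiff, Finset.mem_insert, Finset.mem_singleton] at hcv
  obtain ⟨hcvL, hcvF⟩ := hcv
  push_neg at hcvF
  obtain ⟨hcvu, hcvc⟩ := hcvF
  set φ' : V → ℕ := fun w => if hw : w = v then cv else φ ⟨w, hw⟩ with hφ'def
  have hφ'v : φ' v = cv := dif_pos rfl
  have hφ'ne : ∀ (w : V) (hw : w ≠ v), φ' w = φ ⟨w, hw⟩ := fun w hw => dif_neg hw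
  refine ⟨φ', ?_, ?_, ?_⟩
  · intro w
    by_cases hw : w = v
    · subst hw; rw [hφ'v]; exact hcvL
    · rw [hφ'ne w hw]; exact hφL ⟨w, hw⟩
  · -- proper
    intro a b hab
    by_cases ha : a = v
    · have hb : b = u := honly b (ha ▸ hab)
      rw [ha, hb, hφ'v, hφ'ne u huv]
      exact hcvu
    · by_cases hb : b = v
      · have ha' : a = u := honly a (hb ▸ hab.symm)
        rw [ha', hb, hφ'v, hφ'ne u huv]
        exact fun h' => hcvu h'.symm
      · rw [hφ'ne a ha, hφ'ne b hb]
        exact hφp (show (G.induce {w : V | w ≠ v}).Adj ⟨a, ha⟩ ⟨b, hb⟩ from hab)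
  · -- conflict-free
    intro w hw
    by_cases hwv : w = v
    · refine ⟨φ' u, u, ⟨hwv ▸ hadj, rfl⟩, ?_⟩
      rintro x ⟨hx, -⟩
      exact honly x (hwv ▸ hx)
    · by_cases hwu : w = u
      · rw [hwu]
        by_cases hiso : ∃ x, (G.induce {w : V | w ≠ v}).Adj ⟨u, huv⟩ x
        · obtain ⟨x, ⟨hxadj, hxc⟩, hxuniq⟩ := hcprop hiso
          refine ⟨c, x.1, ⟨hxadj, ?_⟩, ?_⟩
          · rw [hφ'ne x.1 x.2]; exact hxc
          · rintro y ⟨hyadj, hyc⟩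
            by_cases hyv : y = v
            · subst hyv
              rw [hφ'v] at hyc
              exact absurd hyc hcvc
            · have := hxuniq ⟨y, hyv⟩ ⟨hyadj, by rw [← hφ'ne y hyv]; exact hyc⟩
              exact congrArg Subtype.val this
        · -- u isolated in G - v : its only neighbor is v
          refine ⟨cv, v, ⟨hadj.symm, hφ'v⟩, ?_⟩
          rintro y ⟨hyadj, -⟩
          by_contra hyv
          exact hiso ⟨⟨y, hyv⟩, show G.Adj u y from hyadj⟩
      · -- w ≠ u, w ≠ v : neighborhood unchanged
        have hnv : ∀ y, G.Adj w y → y ≠ v := fun y hy hyv => by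
          subst hyv
          exact hwu (honly w hy.symm)
        obtain ⟨x, hx⟩ := hw
        obtain ⟨c', ⟨x', ⟨hx'adj, hx'c⟩, hx'uniq⟩⟩ :=
          hφc ⟨w, hwv⟩ ⟨⟨x, hnv x hx⟩, show G.Adj w x from hx⟩
        refine ⟨c', x'.1, ⟨hx'adj, by rw [hφ'ne x'.1 x'.2]; exact hx'c⟩, ?_⟩
        rintro y ⟨hyadj, hyc⟩
        have hyv := hnv y hyadj
        have := hx'uniq ⟨y, hyv⟩ ⟨hyadj, by rw [← hφ'ne y hyv]; exact hyc⟩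
        exact congrArg Subtype.val this
end

section
/- For every connected graph H, there exists a connected graph G containing H as an induced subgraph such that G is not proper conflict-free (degree+1)-choosable, i.e., there is a list assignment L of G with |L(v)| ≥ d_G(v)+1 for every vertex v for which G admits no proper conflict-free L-coloring. -/
open SimpleGraph

/-! ### Auxiliary construction

We attach to `H` a gadget consisting of two 4-cycles sharing a vertex `a` (vertex `0` of
`Fin 7`), with `a` also joined to a fixed vertex `w0` of `H`.  Lists: `{1,2,3}` on the first
cycle, `{4,5,6}` on the second, `{1,…,6}` on `a` (which has degree 5), and huge lists on `H`.
Conflict-free conditions at the degree-2 cycle vertices force each 4-cycle to be rainbow,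
whence `φ a ∉ {1,…,6}`, a contradiction. -/

set_option linter.unusedSectionVars false
set_option linter.unusedVariables false

lemma pcf_pigeon (t a b c d : ℕ) (m1 : b = t+1 ∨ b = t+2 ∨ b = t+3)
    (m2 : c = t+1 ∨ c = t+2 ∨ c = t+3) (m3 : d = t+1 ∨ d = t+2 ∨ d = t+3)
    (h1 : a ≠ b) (h2 : a ≠ c) (h3 : a ≠ d) (h4 : b ≠ c) (h5 : b ≠ d) (h6 : c ≠ d) :
    a ≠ t+1 ∧ a ≠ t+2 ∧ a ≠ t+3 := by omega

def gE : List (Fin 7 × Fin 7) := [(0,1),(1,2),(2,3),(3,0),(0,4),(4,5),(5,6),(6,0)]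

def gadget : SimpleGraph (Fin 7) where
  Adj i j := (i, j) ∈ gE ∨ (j, i) ∈ gE
  symm := ⟨fun i j h => Or.symm h⟩
  loopless := ⟨by intro i; fin_cases i <;> decide⟩

instance : DecidableRel gadget.Adj :=
  fun i j => inferInstanceAs (Decidable ((i,j) ∈ gE ∨ (j,i) ∈ gE))

def bigG {W : Type} (H : SimpleGraph W) (w0 : W) : SimpleGraph (W ⊕ Fin 7) where
  Adj x y :=
    match x, y with
    | Sum.inl u, Sum.inl v => H.Adj u v
    | Sum.inl u, Sum.inr j => u = w0 ∧ j = 0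
    | Sum.inr j, Sum.inl u => u = w0 ∧ j = 0
    | Sum.inr i, Sum.inr j => gadget.Adj i j
  symm := by
    constructor
    rintro (u|i) (v|j) h
    · exact h.symm
    · exact h
    · exact h
    · exact h.symm
  loopless := by
    constructor
    rintro (u|i) h
    · exact H.irrefl h
    · exact gadget.irrefl h

def gl : ℕ → Finset ℕ
  | 0 => {1,2,3,4,5,6}
  | 1 | 2 | 3 => {1,2,3}
  | _ => {4,5,6}

def L0 (W : Type) [Fintype W] : W ⊕ Fin 7 → Finset ℕ
  | Sum.inl _ => Finset.range (Fintype.card W + 8)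
  | Sum.inr j => gl j.val

section
variable {W : Type} [Fintype W] {H : SimpleGraph W} {w0 : W}

lemma two_nbhd (φ : W ⊕ Fin 7 → ℕ) (hpcf : IsPCF (bigG H w0) φ)
    (v p q : W ⊕ Fin 7) (hpq : p ≠ q)
    (hnb : ∀ x, (bigG H w0).Adj v x → x = p ∨ x = q)
    (hp : (bigG H w0).Adj v p) (hq : (bigG H w0).Adj v q) : φ p ≠ φ q := by
  intro heq
  obtain ⟨c, u, ⟨hu, huc⟩, huniq⟩ := hpcf.2 v ⟨p, hp⟩
  have hpc : φ p = c := by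
    rcases hnb u hu with rfl | rfl
    · exact huc
    · rw [heq]; exact huc
  have h1 : p = u := huniq p ⟨hp, hpc⟩
  have h2 : q = u := huniq q ⟨hq, heq ▸ hpc⟩
  exact hpq (h1.trans h2.symm)

lemma no_pcf (φ : W ⊕ Fin 7 → ℕ)
    (hmem : ∀ j : Fin 7, φ (Sum.inr j) ∈ L0 W (Sum.inr j))
    (hpcf : IsPCF (bigG H w0) φ) : False := by
  have nb1 : ∀ x, (bigG H w0).Adj (Sum.inr 1) x → x = Sum.inr 0 ∨ x = Sum.inr 2 := by
    rintro (u|k) h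
    · exact absurd h.2 (by decide)
    · rcases (by decide : ∀ k : Fin 7, gadget.Adj 1 k → k = 0 ∨ k = 2) k h with rfl | rfl
      · exact Or.inl rfl
      · exact Or.inr rfl
  have nb2 : ∀ x, (bigG H w0).Adj (Sum.inr 2) x → x = Sum.inr 1 ∨ x = Sum.inr 3 := by
    rintro (u|k) h
    · exact absurd h.2 (by decide)
    · rcases (by decide : ∀ k : Fin 7, gadget.Adj 2 k → k = 1 ∨ k = 3) k h with rfl | rfl
      · exact Or.inl rfl
      · exact Or.inr rfl
  have nb4 : ∀ x, (bigG H w0).Adj (Sum.inr 4) x → x = Sum.inr 0 ∨ x = Sum.inr 5 := by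
    rintro (u|k) h
    · exact absurd h.2 (by decide)
    · rcases (by decide : ∀ k : Fin 7, gadget.Adj 4 k → k = 0 ∨ k = 5) k h with rfl | rfl
      · exact Or.inl rfl
      · exact Or.inr rfl
  have nb5 : ∀ x, (bigG H w0).Adj (Sum.inr 5) x → x = Sum.inr 4 ∨ x = Sum.inr 6 := by
    rintro (u|k) h
    · exact absurd h.2 (by decide)
    · rcases (by decide : ∀ k : Fin 7, gadget.Adj 5 k → k = 4 ∨ k = 6) k h with rfl | rfl
      · exact Or.inl rfl
      · exact Or.inr rfl
  have inrne : ∀ (a b : Fin 7), a ≠ b → (Sum.inr a : W ⊕ Fin 7) ≠ Sum.inr b :=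
    fun a b h h' => h (Sum.inr.inj h')
  have e01 : (bigG H w0).Adj (Sum.inr 0) (Sum.inr 1) := (by decide : gadget.Adj 0 1)
  have e10 : (bigG H w0).Adj (Sum.inr 1) (Sum.inr 0) := (by decide : gadget.Adj 1 0)
  have e12 : (bigG H w0).Adj (Sum.inr 1) (Sum.inr 2) := (by decide : gadget.Adj 1 2)
  have e21 : (bigG H w0).Adj (Sum.inr 2) (Sum.inr 1) := (by decide : gadget.Adj 2 1)
  have e23 : (bigG H w0).Adj (Sum.inr 2) (Sum.inr 3) := (by decide : gadget.Adj 2 3)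
  have e03 : (bigG H w0).Adj (Sum.inr 0) (Sum.inr 3) := (by decide : gadget.Adj 0 3)
  have e04 : (bigG H w0).Adj (Sum.inr 0) (Sum.inr 4) := (by decide : gadget.Adj 0 4)
  have e40 : (bigG H w0).Adj (Sum.inr 4) (Sum.inr 0) := (by decide : gadget.Adj 4 0)
  have e45 : (bigG H w0).Adj (Sum.inr 4) (Sum.inr 5) := (by decide : gadget.Adj 4 5)
  have e54 : (bigG H w0).Adj (Sum.inr 5) (Sum.inr 4) := (by decide : gadget.Adj 5 4)
  have e56 : (bigG H w0).Adj (Sum.inr 5) (Sum.inr 6) := (by decide : gadget.Adj 5 6)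
  have e06 : (bigG H w0).Adj (Sum.inr 0) (Sum.inr 6) := (by decide : gadget.Adj 0 6)
  have d02 : φ (Sum.inr 0) ≠ φ (Sum.inr 2) :=
    two_nbhd φ hpcf _ _ _ (inrne 0 2 (by decide)) nb1 e10 e12
  have d13 : φ (Sum.inr 1) ≠ φ (Sum.inr 3) :=
    two_nbhd φ hpcf _ _ _ (inrne 1 3 (by decide)) nb2 e21 e23
  have d05 : φ (Sum.inr 0) ≠ φ (Sum.inr 5) :=
    two_nbhd φ hpcf _ _ _ (inrne 0 5 (by decide)) nb4 e40 e45
  have d46 : φ (Sum.inr 4) ≠ φ (Sum.inr 6) :=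
    two_nbhd φ hpcf _ _ _ (inrne 4 6 (by decide)) nb5 e54 e56
  have p01 := hpcf.1 e01
  have p12 := hpcf.1 e12
  have p23 := hpcf.1 e23
  have p03 := hpcf.1 e03
  have p04 := hpcf.1 e04
  have p45 := hpcf.1 e45
  have p56 := hpcf.1 e56
  have p06 := hpcf.1 e06
  have m0 : φ (Sum.inr 0) ∈ ({1,2,3,4,5,6} : Finset ℕ) := hmem 0
  have m1 : φ (Sum.inr 1) ∈ ({1,2,3} : Finset ℕ) := hmem 1
  have m2 : φ (Sum.inr 2) ∈ ({1,2,3} : Finset ℕ) := hmem 2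
  have m3 : φ (Sum.inr 3) ∈ ({1,2,3} : Finset ℕ) := hmem 3
  have m4 : φ (Sum.inr 4) ∈ ({4,5,6} : Finset ℕ) := hmem 4
  have m5 : φ (Sum.inr 5) ∈ ({4,5,6} : Finset ℕ) := hmem 5
  have m6 : φ (Sum.inr 6) ∈ ({4,5,6} : Finset ℕ) := hmem 6
  simp only [Finset.mem_insert, Finset.mem_singleton] at m0 m1 m2 m3 m4 m5 m6
  have hlow := pcf_pigeon 0 _ _ _ _ (by omega) (by omega) (by omega) p01 d02 p03 p12 d13 p23
  have hhigh := pcf_pigeon 3 _ _ _ _ (by omega) (by omega) (by omega) p04 d05 p06 p45 d46 p56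
  rcases m0 with h|h|h|h|h|h
  · exact hlow.1 h
  · exact hlow.2.1 h
  · exact hlow.2.2 h
  · exact hhigh.1 h
  · exact hhigh.2.1 h
  · exact hhigh.2.2 h

lemma ncard_le_two {α : Type*} (a b : α) : ({a, b} : Set α).ncard ≤ 2 := by
  calc ({a, b} : Set α).ncard ≤ ({b} : Set α).ncard + 1 := Set.ncard_insert_le _ _
    _ ≤ 2 := by simp [Set.ncard_singleton]

lemma ncard_le_five {α : Type*} (a b c d e : α) : ({a, b, c, d, e} : Set α).ncard ≤ 5 := by
  calc ({a,b,c,d,e} : Set α).ncard ≤ ({b,c,d,e} : Set α).ncard + 1 := Set.ncard_insert_le _ _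
    _ ≤ ({c,d,e} : Set α).ncard + 1 + 1 :=
        Nat.add_le_add_right (Set.ncard_insert_le _ _) 1
    _ ≤ ({d,e} : Set α).ncard + 1 + 1 + 1 :=
        Nat.add_le_add_right (Nat.add_le_add_right (Set.ncard_insert_le _ _) 1) 1
    _ ≤ ({e} : Set α).ncard + 1 + 1 + 1 + 1 :=
        Nat.add_le_add_right (Nat.add_le_add_right (Nat.add_le_add_right (Set.ncard_insert_le _ _) 1) 1) 1
    _ ≤ 5 := by simp [Set.ncard_singleton]

lemma nbhd0 : (bigG H w0).neighborSet (Sum.inr 0) ⊆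
    {Sum.inl w0, Sum.inr 1, Sum.inr 3, Sum.inr 4, Sum.inr 6} := by
  rintro (u|k) h
  · obtain ⟨rfl, -⟩ := h
    exact Or.inl rfl
  · rcases (by decide : ∀ k : Fin 7, gadget.Adj 0 k → k = 1 ∨ k = 3 ∨ k = 4 ∨ k = 6) k h
      with rfl | rfl | rfl | rfl <;> simp

lemma nbhdj (j : Fin 7) (p q : Fin 7) (hj : j ≠ 0)
    (hpq : ∀ k : Fin 7, gadget.Adj j k → k = p ∨ k = q) :
    (bigG H w0).neighborSet (Sum.inr j) ⊆ {Sum.inr p, Sum.inr q} := by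
  rintro (u|k) h
  · exact absurd h.2 hj
  · rcases hpq k h with rfl | rfl <;> simp

lemma deg_bound (j : Fin 7) :
    ((bigG H w0).neighborSet (Sum.inr j)).ncard + 1 ≤ (L0 W (Sum.inr j)).card := by
  have hc3 : ∀ j : Fin 7, j.val = 1 ∨ j.val = 2 ∨ j.val = 3 → (L0 W (Sum.inr j)).card = 3 := by
    rintro j (h | h | h) <;>
      · show (gl j.val).card = 3
        rw [h]
        decide
  have hc3' : ∀ j : Fin 7, j.val = 4 ∨ j.val = 5 ∨ j.val = 6 → (L0 W (Sum.inr j)).card = 3 := by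
    rintro j (h | h | h) <;>
      · show (gl j.val).card = 3
        rw [h]
        decide
  fin_cases j
  · -- j = 0
    show ((bigG H w0).neighborSet (Sum.inr 0)).ncard + 1 ≤ (L0 W (Sum.inr 0)).card
    have hb := le_trans
      (Set.ncard_le_ncard (nbhd0 (H := H) (w0 := w0)) (Set.toFinite _))
      (ncard_le_five _ _ _ _ _)
    have hc : (L0 W (Sum.inr 0)).card = 6 := by
      show (gl (0 : Fin 7).val).card = 6
      decide
    omega
  · show ((bigG H w0).neighborSet (Sum.inr 1)).ncard + 1 ≤ (L0 W (Sum.inr 1)).card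
    have hb := le_trans
      (Set.ncard_le_ncard (nbhdj (H := H) (w0 := w0) 1 0 2 (by decide) (by decide))
        (Set.toFinite _)) (ncard_le_two _ _)
    have hc := hc3 1 (by decide)
    omega
  · show ((bigG H w0).neighborSet (Sum.inr 2)).ncard + 1 ≤ (L0 W (Sum.inr 2)).card
    have hb := le_trans
      (Set.ncard_le_ncard (nbhdj (H := H) (w0 := w0) 2 1 3 (by decide) (by decide))
        (Set.toFinite _)) (ncard_le_two _ _)
    have hc := hc3 2 (by decide)
    omega
  · show ((bigG H w0).neighborSet (Sum.inr 3)).ncard + 1 ≤ (L0 W (Sum.inr 3)).card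
    have hb := le_trans
      (Set.ncard_le_ncard (nbhdj (H := H) (w0 := w0) 3 2 0 (by decide) (by decide))
        (Set.toFinite _)) (ncard_le_two _ _)
    have hc := hc3 3 (by decide)
    omega
  · show ((bigG H w0).neighborSet (Sum.inr 4)).ncard + 1 ≤ (L0 W (Sum.inr 4)).card
    have hb := le_trans
      (Set.ncard_le_ncard (nbhdj (H := H) (w0 := w0) 4 0 5 (by decide) (by decide))
        (Set.toFinite _)) (ncard_le_two _ _)
    have hc := hc3' 4 (by decide)
    omega
  · show ((bigG H w0).neighborSet (Sum.inr 5)).ncard + 1 ≤ (L0 W (Sum.inr 5)).card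
    have hb := le_trans
      (Set.ncard_le_ncard (nbhdj (H := H) (w0 := w0) 5 4 6 (by decide) (by decide))
        (Set.toFinite _)) (ncard_le_two _ _)
    have hc := hc3' 5 (by decide)
    omega
  · show ((bigG H w0).neighborSet (Sum.inr 6)).ncard + 1 ≤ (L0 W (Sum.inr 6)).card
    have hb := le_trans
      (Set.ncard_le_ncard (nbhdj (H := H) (w0 := w0) 6 5 0 (by decide) (by decide))
        (Set.toFinite _)) (ncard_le_two _ _)
    have hc := hc3' 6 (by decide)
    omega

def homInl (H : SimpleGraph W) (w0 : W) : H →g bigG H w0 := ⟨Sum.inl, fun {u v} h => h⟩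

lemma bigG_connected (hH : H.Connected) : (bigG H w0).Connected := by
  have r0 : (bigG H w0).Reachable (Sum.inr 0) (Sum.inl w0) :=
    SimpleGraph.Adj.reachable ⟨rfl, rfl⟩
  have step : ∀ a b : Fin 7, gadget.Adj a b →
      (bigG H w0).Reachable (Sum.inr a) (Sum.inr b) :=
    fun a b h => SimpleGraph.Adj.reachable h
  have key : ∀ x, (bigG H w0).Reachable x (Sum.inl w0) := by
    rintro (v|j)
    · have hcoe : ∀ u : W, homInl H w0 u = Sum.inl u := fun _ => rfl
      rw [← hcoe v, ← hcoe w0]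
      exact (hH.preconnected v w0).map (homInl H w0)
    · fin_cases j
      · exact r0
      · exact (step 1 0 (by decide)).trans r0
      · exact (step 2 1 (by decide)).trans ((step 1 0 (by decide)).trans r0)
      · exact (step 3 0 (by decide)).trans r0
      · exact (step 4 0 (by decide)).trans r0
      · exact (step 5 4 (by decide)).trans ((step 4 0 (by decide)).trans r0)
      · exact (step 6 0 (by decide)).trans r0
  haveI : Nonempty (W ⊕ Fin 7) := ⟨Sum.inr 0⟩
  exact ⟨fun x y => (key x).trans (key y).symm⟩

end

/-- every connected graph H embeds as an induced subgraph into some connected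
graph G that is not proper conflict-free (degree+1)-choosable. -/
theorem exists_supergraph_not_pcf_degree_plus_one_choosable
    {W : Type} [Fintype W] (H : SimpleGraph W) (hH : H.Connected) :
    ∃ (n : ℕ) (G : SimpleGraph (Fin n)),
      G.Connected ∧ Nonempty (H ↪g G) ∧
      ∃ L : Fin n → Finset ℕ,
        (∀ v, gdeg G v + 1 ≤ (L v).card) ∧
        ¬ ∃ φ : Fin n → ℕ, IsPCFList G L φ := by
  obtain ⟨w0⟩ := hH.nonempty
  let ε : (W ⊕ Fin 7) ≃ Fin (Fintype.card W + 7) :=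
    (Equiv.sumCongr (Fintype.equivFin W) (Equiv.refl (Fin 7))).trans finSumFinEquiv
  have key : ∀ x y : W ⊕ Fin 7, (bigG H w0).Adj x y →
      ((bigG H w0).comap ⇑ε.symm).Adj (ε x) (ε y) := by
    intro x y h
    show (bigG H w0).Adj (ε.symm (ε x)) (ε.symm (ε y))
    rw [Equiv.symm_apply_apply, Equiv.symm_apply_apply]
    exact h
  refine ⟨Fintype.card W + 7, (bigG H w0).comap ⇑ε.symm, ?_, ?_, fun i => L0 W (ε.symm i),
    ?_, ?_⟩
  · -- connectivity
    exact Connected.map ⟨⇑ε, fun {x y} h => key x y h⟩ ε.surjective (bigG_connected hH)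
  · -- induced embedding of H
    refine ⟨⟨⟨fun v => ε (Sum.inl v), fun u v h => ?_⟩, ?_⟩⟩
    · exact Sum.inl_injective (ε.injective h)
    · intro a b
      show (bigG H w0).Adj (ε.symm (ε (Sum.inl a))) (ε.symm (ε (Sum.inl b))) ↔ H.Adj a b
      rw [Equiv.symm_apply_apply, Equiv.symm_apply_apply]
      rfl
  · -- list sizes
    intro i
    obtain ⟨x, rfl⟩ := ε.surjective i
    have hnb : ((bigG H w0).comap ⇑ε.symm).neighborSet (ε x) =
        ⇑ε '' (bigG H w0).neighborSet x := by
      rw [Equiv.image_eq_preimage_symm]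
      ext y
      show (bigG H w0).Adj (ε.symm (ε x)) (ε.symm y) ↔ (bigG H w0).Adj x (ε.symm y)
      rw [Equiv.symm_apply_apply]
    have hdeg : gdeg ((bigG H w0).comap ⇑ε.symm) (ε x) =
        ((bigG H w0).neighborSet x).ncard := by
      show (((bigG H w0).comap ⇑ε.symm).neighborSet (ε x)).ncard = _
      rw [hnb, Set.ncard_image_of_injective _ ε.injective]
    show gdeg ((bigG H w0).comap ⇑ε.symm) (ε x) + 1 ≤ (L0 W (ε.symm (ε x))).card
    rw [hdeg, Equiv.symm_apply_apply]
    rcases x with v | j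
    · have h1 : ((bigG H w0).neighborSet (Sum.inl v)).ncard ≤ Fintype.card W + 7 := by
        have h2 := Set.ncard_le_ncard
          (Set.subset_univ ((bigG H w0).neighborSet (Sum.inl v))) Set.finite_univ
        simpa [Set.ncard_univ, Nat.card_eq_fintype_card] using h2
      have h3 : (L0 W (Sum.inl v)).card = Fintype.card W + 8 := by
        show (Finset.range (Fintype.card W + 8)).card = _
        rw [Finset.card_range]
      omega
    · exact deg_bound j
  · -- no proper conflict-free coloring from these lists
    rintro ⟨φ, hmem, hprop, hcf⟩
    refine no_pcf (H := H) (w0 := w0) (fun x => φ (ε x)) ?_ ⟨?_, ?_⟩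
    · intro j
      have h := hmem (ε (Sum.inr j))
      simpa only [Equiv.symm_apply_apply] using h
    · intro u v h
      exact hprop (key u v h)
    · rintro v ⟨u, hu⟩
      obtain ⟨c, u', ⟨h1, h2⟩, h3⟩ := hcf (ε v) ⟨ε u, key v u hu⟩
      refine ⟨c, ε.symm u', ⟨?_, ?_⟩, ?_⟩
      · have h1' : (bigG H w0).Adj (ε.symm (ε v)) (ε.symm u') := h1
        rwa [Equiv.symm_apply_apply] at h1'
      · show φ (ε (ε.symm u')) = c
        rw [Equiv.apply_symm_apply]
        exact h2
      · rintro y ⟨hy1, hy2⟩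
        have hyu : ε y = u' := h3 (ε y) ⟨key v y hy1, hy2⟩
        rw [← hyu, Equiv.symm_apply_apply]
end

section
/- Let H be a connected graph, v_0 a vertex of H of degree d, and let G be obtained from H together with d+1 disjoint 4-cycles by identifying v_0 with one vertex from each 4-cycle. Then there is a list assignment L of G with |L(u)| ≥ d_G(u)+1 for every vertex u such that G has no proper conflict-free L-coloring; in particular one may take the three free vertices of the i-th 4-cycle to have list {3i−2,3i−1,3i}, the identified vertex to have list {1,...,3d+3}, and every other vertex u to have list {1,...,d_G(u)+1}. -/
open SimpleGraph

/-- The graph obtained from H and d+1 disjoint 4-cycles by identifying a vertex v0 of H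
with one vertex of each 4-cycle. The i-th 4-cycle is v0, (i,0), (i,1), (i,2), v0. -/
def glueCycles {W : Type*} (H : SimpleGraph W) (v0 : W) (d : ℕ) :
    SimpleGraph (W ⊕ (Fin (d+1) × Fin 3)) :=
  SimpleGraph.fromRel (fun a b =>
    (∃ x y : W, a = Sum.inl x ∧ b = Sum.inl y ∧ H.Adj x y) ∨
    (∃ i : Fin (d+1), a = Sum.inl v0 ∧ (b = Sum.inr (i, 0) ∨ b = Sum.inr (i, 2))) ∨
    (∃ i : Fin (d+1), (a = Sum.inr (i, 0) ∧ b = Sum.inr (i, 1)) ∨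
      (a = Sum.inr (i, 1) ∧ b = Sum.inr (i, 2))))


section Aux
variable {W : Type*} {H : SimpleGraph W} {v0 : W} {d : ℕ}

lemma glue_adj_inl_inl {x y : W} :
    (glueCycles H v0 d).Adj (Sum.inl x) (Sum.inl y) ↔ H.Adj x y := by
  simp only [glueCycles, SimpleGraph.fromRel_adj]
  constructor
  · rintro ⟨hne, h|h⟩
    · aesop
    · rcases h with ⟨a,b,rfl2,rfl3,hab⟩|h|h
      · cases rfl2; cases rfl3; exact hab.symm
      · aesop
      · aesop
  · intro h
    exact ⟨by simp [h.ne], Or.inl (Or.inl ⟨x, y, rfl, rfl, h⟩)⟩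

lemma glue_adj_inl_inr {x : W} {i : Fin (d+1)} {j : Fin 3} :
    (glueCycles H v0 d).Adj (Sum.inl x) (Sum.inr (i, j)) ↔ x = v0 ∧ (j = 0 ∨ j = 2) := by
  simp only [glueCycles, SimpleGraph.fromRel_adj]
  constructor
  · rintro ⟨hne, h|h⟩ <;> aesop
  · rintro ⟨rfl, h⟩
    exact ⟨by simp, Or.inl (Or.inr (Or.inl ⟨i, rfl, by rcases h with rfl|rfl <;> simp⟩))⟩

lemma glue_adj_inr_inr {i i' : Fin (d+1)} {j j' : Fin 3} :
    (glueCycles H v0 d).Adj (Sum.inr (i, j)) (Sum.inr (i', j')) ↔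
      i = i' ∧ ((j = 0 ∧ j' = 1) ∨ (j = 1 ∧ j' = 0) ∨ (j = 1 ∧ j' = 2) ∨ (j = 2 ∧ j' = 1)) := by
  simp only [glueCycles, SimpleGraph.fromRel_adj]
  constructor
  · rintro ⟨hne, h|h⟩ <;> aesop
  · rintro ⟨rfl, h⟩
    rcases h with ⟨rfl,rfl⟩|⟨rfl,rfl⟩|⟨rfl,rfl⟩|⟨rfl,rfl⟩
    · exact ⟨by simp, Or.inl (Or.inr (Or.inr ⟨i, Or.inl ⟨rfl, rfl⟩⟩))⟩
    · exact ⟨by simp, Or.inr (Or.inr (Or.inr ⟨i, Or.inl ⟨rfl, rfl⟩⟩))⟩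
    · exact ⟨by simp, Or.inl (Or.inr (Or.inr ⟨i, Or.inr ⟨rfl, rfl⟩⟩))⟩
    · exact ⟨by simp, Or.inr (Or.inr (Or.inr ⟨i, Or.inr ⟨rfl, rfl⟩⟩))⟩


lemma glue_nbr_mid {i : Fin (d+1)} {u : W ⊕ (Fin (d+1) × Fin 3)} :
    (glueCycles H v0 d).Adj (Sum.inr (i, 1)) u ↔ u = Sum.inr (i, 0) ∨ u = Sum.inr (i, 2) := by
  constructor
  · intro h
    match u with
    | Sum.inl x =>
        have := glue_adj_inl_inr.mp h.symm
        rcases this.2 with h2 | h2 <;> simp at h2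
    | Sum.inr (i', j') =>
        obtain ⟨rfl, hj⟩ := glue_adj_inr_inr.mp h
        rcases hj with ⟨h1,h2⟩|⟨h1,h2⟩|⟨h1,h2⟩|⟨h1,h2⟩ <;>
          first | exact absurd h1 (by decide) | (subst h2; simp)
  · rintro (rfl | rfl)
    · exact glue_adj_inr_inr.mpr ⟨rfl, by simp⟩
    · exact glue_adj_inr_inr.mpr ⟨rfl, by simp⟩

lemma glue_nbr_zero {i : Fin (d+1)} {u : W ⊕ (Fin (d+1) × Fin 3)} :
    (glueCycles H v0 d).Adj (Sum.inr (i, 0)) u ↔ u = Sum.inl v0 ∨ u = Sum.inr (i, 1) := by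
  constructor
  · intro h
    match u with
    | Sum.inl x =>
        have := glue_adj_inl_inr.mp h.symm
        simp [this.1]
    | Sum.inr (i', j') =>
        obtain ⟨rfl, hj⟩ := glue_adj_inr_inr.mp h
        rcases hj with ⟨h1,h2⟩|⟨h1,h2⟩|⟨h1,h2⟩|⟨h1,h2⟩ <;>
          first | exact absurd h1 (by decide) | (subst h2; simp)
  · rintro (rfl | rfl)
    · exact (glue_adj_inl_inr.mpr ⟨rfl, by simp⟩).symm
    · exact glue_adj_inr_inr.mpr ⟨rfl, by simp⟩

lemma glue_nbr_two {i : Fin (d+1)} {u : W ⊕ (Fin (d+1) × Fin 3)} :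
    (glueCycles H v0 d).Adj (Sum.inr (i, 2)) u ↔ u = Sum.inl v0 ∨ u = Sum.inr (i, 1) := by
  constructor
  · intro h
    match u with
    | Sum.inl x =>
        have := glue_adj_inl_inr.mp h.symm
        simp [this.1]
    | Sum.inr (i', j') =>
        obtain ⟨rfl, hj⟩ := glue_adj_inr_inr.mp h
        rcases hj with ⟨h1,h2⟩|⟨h1,h2⟩|⟨h1,h2⟩|⟨h1,h2⟩ <;>
          first | exact absurd h1 (by decide) | (subst h2; simp)
  · rintro (rfl | rfl)
    · exact (glue_adj_inl_inr.mpr ⟨rfl, by simp⟩).symm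
    · exact (glue_adj_inr_inr.mpr ⟨rfl, by simp⟩).symm

lemma gdeg_cycle0 (i : Fin (d+1)) :
    gdeg (glueCycles H v0 d) (Sum.inr (i, 0)) = 2 := by
  have h : (glueCycles H v0 d).neighborSet (Sum.inr (i, 0)) =
      {Sum.inl v0, Sum.inr (i, 1)} := by ext u; exact glue_nbr_zero
  rw [gdeg, h, Set.ncard_pair (by simp)]

lemma gdeg_cycle1 (i : Fin (d+1)) :
    gdeg (glueCycles H v0 d) (Sum.inr (i, 1)) = 2 := by
  have h : (glueCycles H v0 d).neighborSet (Sum.inr (i, 1)) =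
      {Sum.inr (i, 0), Sum.inr (i, 2)} := by ext u; exact glue_nbr_mid
  rw [gdeg, h, Set.ncard_pair (by simp)]

lemma gdeg_cycle2 (i : Fin (d+1)) :
    gdeg (glueCycles H v0 d) (Sum.inr (i, 2)) = 2 := by
  have h : (glueCycles H v0 d).neighborSet (Sum.inr (i, 2)) =
      {Sum.inl v0, Sum.inr (i, 1)} := by ext u; exact glue_nbr_two
  rw [gdeg, h, Set.ncard_pair (by simp)]

lemma gdeg_cycle (i : Fin (d+1)) (j : Fin 3) :
    gdeg (glueCycles H v0 d) (Sum.inr (i, j)) = 2 := by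
  fin_cases j
  · exact gdeg_cycle0 i
  · exact gdeg_cycle1 i
  · exact gdeg_cycle2 i

lemma glue_nbrSet_v0 [Fintype W] :
    (glueCycles H v0 d).neighborSet (Sum.inl v0) =
      (Sum.inl '' H.neighborSet v0) ∪
      (Set.range fun i : Fin (d+1) => Sum.inr (i, (0 : Fin 3))) ∪
      (Set.range fun i : Fin (d+1) => Sum.inr (i, (2 : Fin 3))) := by
  ext u
  match u with
  | Sum.inl x =>
      simp only [SimpleGraph.mem_neighborSet, glue_adj_inl_inl]
      simp [Set.mem_image]
  | Sum.inr (i, j) =>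
      simp only [SimpleGraph.mem_neighborSet, glue_adj_inl_inr]
      simp only [Set.mem_union, Set.mem_image, Set.mem_range]
      constructor
      · rintro ⟨-, (rfl | rfl)⟩
        · exact Or.inl (Or.inr ⟨i, rfl⟩)
        · exact Or.inr ⟨i, rfl⟩
      · rintro ((⟨x, -, h⟩ | ⟨i', h⟩) | ⟨i', h⟩)
        · simp at h
        · obtain ⟨rfl, rfl⟩ : i' = i ∧ (0 : Fin 3) = j := by
            simpa [Prod.ext_iff, eq_comm] using h
          exact ⟨trivial, Or.inl rfl⟩
        · obtain ⟨rfl, rfl⟩ : i' = i ∧ (2 : Fin 3) = j := by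
            simpa [Prod.ext_iff, eq_comm] using h
          exact ⟨trivial, Or.inr rfl⟩

lemma gdeg_v0 [Fintype W] (hd : gdeg H v0 = d) :
    gdeg (glueCycles H v0 d) (Sum.inl v0) = 3 * d + 2 := by
  classical
  have hinj0 : Function.Injective
      (fun i : Fin (d+1) => (Sum.inr (i, (0 : Fin 3)) : W ⊕ (Fin (d+1) × Fin 3))) := by
    intro a b h; simpa [Prod.ext_iff] using h
  have hinj2 : Function.Injective
      (fun i : Fin (d+1) => (Sum.inr (i, (2 : Fin 3)) : W ⊕ (Fin (d+1) × Fin 3))) := by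
    intro a b h; simpa [Prod.ext_iff] using h
  have hdisj1 : Disjoint ((Sum.inl '' H.neighborSet v0) : Set (W ⊕ (Fin (d+1) × Fin 3)))
      (Set.range fun i : Fin (d+1) => Sum.inr (i, (0 : Fin 3))) := by
    rw [Set.disjoint_left]; rintro u ⟨x, -, rfl⟩ ⟨i, h⟩; simp at h
  have hdisj2 : Disjoint ((Sum.inl '' H.neighborSet v0) ∪
        Set.range fun i : Fin (d+1) => Sum.inr (i, (0 : Fin 3)))
      (Set.range fun i : Fin (d+1) => Sum.inr (i, (2 : Fin 3))) := by
    rw [Set.disjoint_left]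
    intro u hu ⟨i, hi⟩
    subst hi
    simp only [Set.mem_union, Set.mem_image, Set.mem_range] at hu
    rcases hu with ⟨x, -, h⟩ | ⟨i', h⟩
    · simp at h
    · simp [Prod.ext_iff] at h
  rw [gdeg, glue_nbrSet_v0, Set.ncard_union_eq hdisj2, Set.ncard_union_eq hdisj1,
    Set.ncard_image_of_injective _ Sum.inl_injective,
    ← Set.image_univ, ← Set.image_univ,
    Set.ncard_image_of_injective _ hinj0, Set.ncard_image_of_injective _ hinj2,
    Set.ncard_univ, Nat.card_eq_fintype_card, Fintype.card_fin]
  rw [gdeg] at hd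
  omega

end Aux
open Classical in
noncomputable def theL {W : Type*} (H : SimpleGraph W) (v0 : W) (d : ℕ) :
    (W ⊕ (Fin (d+1) × Fin 3)) → Finset ℕ
  | Sum.inl x => if x = v0 then Finset.Icc 1 (3*d+3)
      else Finset.Icc 1 (gdeg (glueCycles H v0 d) (Sum.inl x) + 1)
  | Sum.inr (i, _) => Finset.Icc (3*(i:ℕ)+1) (3*(i:ℕ)+3)

section Main
variable {W : Type*} {H : SimpleGraph W} {v0 : W} {d : ℕ}

lemma theL_inr (i : Fin (d+1)) (j : Fin 3) :
    theL H v0 d (Sum.inr (i, j)) = Finset.Icc (3*(i:ℕ)+1) (3*(i:ℕ)+3) := rfl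

lemma theL_v0 : theL H v0 d (Sum.inl v0) = Finset.Icc 1 (3*d+3) := by
  simp [theL]

lemma theL_inl {x : W} (hx : x ≠ v0) :
    theL H v0 d (Sum.inl x) = Finset.Icc 1 (gdeg (glueCycles H v0 d) (Sum.inl x) + 1) := by
  simp [theL, hx]

lemma no_pcf_s6 : ¬ ∃ φ, IsPCFList (glueCycles H v0 d) (theL H v0 d) φ := by
  rintro ⟨φ, hmem, hproper, hcf⟩
  have hc0 := hmem (Sum.inl v0)
  rw [theL_v0, Finset.mem_Icc] at hc0
  have hlt : (φ (Sum.inl v0) - 1) / 3 < d + 1 := by omega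
  set i : Fin (d+1) := ⟨(φ (Sum.inl v0) - 1) / 3, hlt⟩ with hidef
  have hic : 3 * (i:ℕ) + 1 ≤ φ (Sum.inl v0) ∧ φ (Sum.inl v0) ≤ 3 * (i:ℕ) + 3 := by
    simp only [hidef]; omega
  have ha := hmem (Sum.inr (i, 0)); rw [theL_inr, Finset.mem_Icc] at ha
  have hb := hmem (Sum.inr (i, 1)); rw [theL_inr, Finset.mem_Icc] at hb
  have hm := hmem (Sum.inr (i, 2)); rw [theL_inr, Finset.mem_Icc] at hm
  have adj01 : (glueCycles H v0 d).Adj (Sum.inr (i,0)) (Sum.inr (i,1)) :=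
    glue_adj_inr_inr.mpr ⟨rfl, by simp⟩
  have adj12 : (glueCycles H v0 d).Adj (Sum.inr (i,1)) (Sum.inr (i,2)) :=
    glue_adj_inr_inr.mpr ⟨rfl, by simp⟩
  have adjv0 : (glueCycles H v0 d).Adj (Sum.inl v0) (Sum.inr (i,0)) :=
    glue_adj_inl_inr.mpr ⟨rfl, Or.inl rfl⟩
  have adjv2 : (glueCycles H v0 d).Adj (Sum.inl v0) (Sum.inr (i,2)) :=
    glue_adj_inl_inr.mpr ⟨rfl, Or.inr rfl⟩
  -- distinct colors on the two outer cycle vertices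
  have ham : φ (Sum.inr (i,0)) ≠ φ (Sum.inr (i,2)) := by
    intro heq
    obtain ⟨c, u, ⟨hadj, hcu⟩, huniq⟩ := hcf (Sum.inr (i,1)) ⟨_, adj12⟩
    have hca : φ (Sum.inr (i,0)) = c := by
      rcases glue_nbr_mid.mp hadj with rfl | rfl
      · exact hcu
      · rw [heq]; exact hcu
    have h0 := huniq (Sum.inr (i,0)) ⟨adj01.symm, hca⟩
    have h2 := huniq (Sum.inr (i,2)) ⟨adj12, by rw [← heq]; exact hca⟩
    rw [← h2] at h0
    simp [Prod.ext_iff] at h0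
  have hab := hproper adj01
  have hbm := hproper adj12
  have hva := hproper adjv0
  have hvm := hproper adjv2
  have hbc0 : φ (Sum.inr (i,1)) = φ (Sum.inl v0) := by omega
  -- conflict-free fails at (i,0)
  obtain ⟨c, u, ⟨hadj, hcu⟩, huniq⟩ := hcf (Sum.inr (i,0)) ⟨_, adj01⟩
  have hcc : c = φ (Sum.inl v0) := by
    rcases glue_nbr_zero.mp hadj with rfl | rfl
    · exact hcu.symm
    · rw [← hcu, hbc0]
  have h0 := huniq (Sum.inl v0) ⟨adjv0.symm, hcc.symm⟩
  have h1 := huniq (Sum.inr (i,1)) ⟨adj01, by rw [hbc0, ← hcc]⟩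
  rw [← h1] at h0
  simp at h0

end Main


/-- the glued graph admits a list assignment with lists of size ≥ degree+1
(given by the explicit lists of the paper) admitting no proper conflict-free coloring. -/
theorem glued_graph_not_pcf_degree_plus_one_choosable
    {W : Type*} [Fintype W] (H : SimpleGraph W) (hH : H.Connected)
    (v0 : W) (d : ℕ) (hd : gdeg H v0 = d) :
    ∃ L : (W ⊕ (Fin (d+1) × Fin 3)) → Finset ℕ,
      (∀ u, gdeg (glueCycles H v0 d) u + 1 ≤ (L u).card) ∧
      (∀ (i : Fin (d+1)) (j : Fin 3),
        L (Sum.inr (i, j)) = Finset.Icc (3 * (i : ℕ) + 1) (3 * (i : ℕ) + 3)) ∧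
      L (Sum.inl v0) = Finset.Icc 1 (3 * d + 3) ∧
      (∀ x : W, x ≠ v0 →
        L (Sum.inl x) = Finset.Icc 1 (gdeg (glueCycles H v0 d) (Sum.inl x) + 1)) ∧
      ¬ ∃ φ, IsPCFList (glueCycles H v0 d) L φ := by
  classical
  refine ⟨theL H v0 d, ?_, fun i j => theL_inr i j, theL_v0, fun x hx => theL_inl hx, no_pcf_s6⟩
  intro u
  match u with
  | Sum.inl x =>
      by_cases hx : x = v0
      · subst hx
        rw [theL_v0, gdeg_v0 hd, Nat.card_Icc]; omega
      · rw [theL_inl hx, Nat.card_Icc]; omega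
  | Sum.inr (i, j) =>
      rw [theL_inr, gdeg_cycle, Nat.card_Icc]
      omega
end

section
/- Let G be a vertex-minimal graph with maximum degree at most 4 admitting a list assignment L with |L(v)| ≥ d_G(v)+3 for all v for which G has no proper conflict-free L-coloring. Then G has minimum degree at least 3. -/
open SimpleGraph

section aux

lemma key_ext {V : Type*} [DecidableEq V] (S : Finset V) (v : V) (hv : v ∉ S)
    (hS : S.card ≤ 3) (ψ : V → ℕ) :
    ∃ F : Finset ℕ, F.card ≤ 1 ∧ ∀ a ∉ F,
      ∃ c : ℕ, ∃! u : V, u ∈ insert v S ∧ Function.update ψ v a u = c := by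
  classical
  by_cases h : ∃ c, (S.filter (fun u => ψ u = c)).card = 1
  · obtain ⟨c, hc⟩ := h
    obtain ⟨u0, hu0⟩ := Finset.card_eq_one.mp hc
    have hu0S : u0 ∈ S ∧ ψ u0 = c := by
      have := Finset.mem_filter.mp (hu0 ▸ Finset.mem_singleton_self u0)
      exact ⟨this.1, this.2⟩
    refine ⟨{c}, by simp, fun a ha => ?_⟩
    simp only [Finset.mem_singleton] at ha
    have hu0v : u0 ≠ v := fun e => hv (e ▸ hu0S.1)
    refine ⟨c, u0, ⟨Finset.mem_insert_of_mem hu0S.1,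
      by rw [Function.update_of_ne hu0v]; exact hu0S.2⟩, ?_⟩
    rintro u ⟨hmem, heq⟩
    rcases Finset.mem_insert.mp hmem with rfl | hS'
    · rw [Function.update_self] at heq; exact absurd heq ha
    · rw [Function.update_of_ne (show _ ≠ v from fun e => hv (by rw [← e]; exact hS'))] at heq
      have : u ∈ S.filter (fun u => ψ u = c) := Finset.mem_filter.mpr ⟨hS', heq⟩
      rw [hu0] at this
      exact Finset.mem_singleton.mp this
  · push_neg at h
    refine ⟨S.image ψ, ?_, fun a ha => ?_⟩
    · by_contra hcard
      push_neg at hcard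
      have h2 : ∀ c ∈ S.image ψ, 2 ≤ (S.filter (fun u => ψ u = c)).card := by
        intro c hc'
        obtain ⟨u, hu, hue⟩ := Finset.mem_image.mp hc'
        have h1 : 0 < (S.filter (fun u => ψ u = c)).card :=
          Finset.card_pos.mpr ⟨u, Finset.mem_filter.mpr ⟨hu, hue⟩⟩
        have := h c
        omega
      have hce := Finset.card_eq_sum_card_image ψ S
      have hsum : 2 * (S.image ψ).card ≤ ∑ c ∈ S.image ψ, (S.filter (fun u => ψ u = c)).card := by
        calc 2 * (S.image ψ).card = ∑ _c ∈ S.image ψ, 2 := by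
              rw [Finset.sum_const]; ring
        _ ≤ _ := Finset.sum_le_sum h2
      omega
    · refine ⟨a, v, ⟨Finset.mem_insert_self _ _, Function.update_self _ _ _⟩, ?_⟩
      rintro u ⟨hmem, heq⟩
      rcases Finset.mem_insert.mp hmem with rfl | hS'
      · rfl
      · rw [Function.update_of_ne (show _ ≠ v from fun e => hv (by rw [← e]; exact hS'))] at heq
        exact absurd (Finset.mem_image.mpr ⟨u, hS', heq⟩) (heq ▸ ha)

end aux

lemma gdeg_eq_card {V : Type*} [Fintype V] (G : SimpleGraph V) [DecidableRel G.Adj] (v : V) :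
    gdeg G v = (G.neighborFinset v).card := by
  rw [gdeg, neighborFinset_def, Set.ncard_eq_toFinset_card']

/-- a vertex-minimal counterexample (max degree ≤ 4, lists of size
≥ degree+3, no proper conflict-free list coloring) has minimum degree ≥ 3. -/
theorem minimal_counterexample_min_degree_three {V : Type} [Fintype V]
    (G : SimpleGraph V) (hΔ : ∀ v, gdeg G v ≤ 4)
    (L : V → Finset ℕ) (hL : ∀ v, gdeg G v + 3 ≤ (L v).card)
    (hno : ¬ ∃ φ : V → ℕ, IsPCFList G L φ)
    (hmin : ∀ (W : Type) [Fintype W] (G' : SimpleGraph W),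
      Fintype.card W < Fintype.card V → (∀ w, gdeg G' w ≤ 4) →
      ∀ L' : W → Finset ℕ, (∀ w, gdeg G' w + 3 ≤ (L' w).card) →
        ∃ φ : W → ℕ, IsPCFList G' L' φ) :
    ∀ v, 3 ≤ gdeg G v := by
  classical
  intro v
  by_contra hlt
  push_neg at hlt
  letI : DecidableRel G.Adj := Classical.decRel _
  letI : DecidableEq V := Classical.decEq _
  have hdv : (G.neighborFinset v).card ≤ 2 := by
    rw [← gdeg_eq_card]; omega
  -- The smaller graph: delete v, make N(v) a clique.
  set W := {w : V // w ≠ v} with hW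
  let G' : SimpleGraph W :=
    { Adj := fun a b => G.Adj a b ∨ ((a : V) ≠ (b : V) ∧ G.Adj v a ∧ G.Adj v b)
      symm := by
        constructor
        rintro a b (h | ⟨hne, h1, h2⟩)
        · exact Or.inl h.symm
        · exact Or.inr ⟨hne.symm, h2, h1⟩
      loopless := by
        constructor
        rintro a (h | ⟨hne, _, _⟩)
        · exact G.loopless.irrefl _ h
        · exact hne rfl }
  letI : DecidableRel G'.Adj := Classical.decRel _
  -- degree bound for G'
  have hdeg' : ∀ a : W, gdeg G' a ≤ gdeg G (a : V) := by
    intro a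
    rw [gdeg_eq_card, gdeg_eq_card]
    have himg : (G'.neighborFinset a).card
        = ((G'.neighborFinset a).image (Subtype.val)).card :=
      (Finset.card_image_of_injective _ Subtype.val_injective).symm
    rw [himg]
    by_cases hav : G.Adj v a
    · have hsub : (G'.neighborFinset a).image Subtype.val ⊆
          ((G.neighborFinset (a : V)).erase v) ∪ ((G.neighborFinset v).erase (a : V)) := by
        intro b hb
        obtain ⟨b', hb', rfl⟩ := Finset.mem_image.mp hb
        rw [mem_neighborFinset] at hb'
        rcases hb' with h | ⟨hne, h1, h2⟩
        · exact Finset.mem_union_left _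
            (Finset.mem_erase.mpr ⟨b'.2, (mem_neighborFinset _ _ _).mpr h⟩)
        · exact Finset.mem_union_right _
            (Finset.mem_erase.mpr ⟨hne.symm, (mem_neighborFinset _ _ _).mpr h2⟩)
      have h1 : ((G.neighborFinset (a : V)).erase v).card = (G.neighborFinset (a:V)).card - 1 :=
        Finset.card_erase_of_mem ((mem_neighborFinset _ _ _).mpr hav.symm)
      have h2 : ((G.neighborFinset v).erase (a : V)).card = (G.neighborFinset v).card - 1 :=
        Finset.card_erase_of_mem ((mem_neighborFinset _ _ _).mpr hav)
      have h3 : 1 ≤ (G.neighborFinset (a:V)).card :=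
        Finset.card_pos.mpr ⟨v, (mem_neighborFinset _ _ _).mpr hav.symm⟩
      have := (Finset.card_le_card hsub).trans (Finset.card_union_le _ _)
      omega
    · have hsub : (G'.neighborFinset a).image Subtype.val ⊆ G.neighborFinset (a : V) := by
        intro b hb
        obtain ⟨b', hb', rfl⟩ := Finset.mem_image.mp hb
        rw [mem_neighborFinset] at hb'
        rcases hb' with h | ⟨hne, h1, h2⟩
        · exact (mem_neighborFinset _ _ _).mpr h
        · exact absurd h1 hav
      exact Finset.card_le_card hsub
  -- apply minimality
  have hcard : Fintype.card W < Fintype.card V := Fintype.card_subtype_lt (x := v) (by simp)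
  obtain ⟨φ', hφ'L, hφ'prop, hφ'cf⟩ := hmin W G' hcard
    (fun w => (hdeg' w).trans (hΔ _)) (fun w => L w)
    (fun w => le_trans (by have := hdeg' w; omega) (hL (w : V)))
  -- base coloring on V
  set ψ : V → ℕ := fun u => if h : u = v then 0 else φ' ⟨u, h⟩ with hψ
  have hψeq : ∀ (u : V) (h : u ≠ v), ψ u = φ' ⟨u, h⟩ := by
    intro u h; simp only [hψ, dif_neg h]
  -- forbidden sets
  have hkey : ∀ x ∈ G.neighborFinset v, ∃ F : Finset ℕ, F.card ≤ 1 ∧ ∀ a ∉ F,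
      ∃ c : ℕ, ∃! u : V, u ∈ insert v ((G.neighborFinset x).erase v) ∧
        Function.update ψ v a u = c := by
    intro x hx
    rw [mem_neighborFinset] at hx
    have hvm : v ∈ G.neighborFinset x := (mem_neighborFinset _ _ _).mpr hx.symm
    have hc : ((G.neighborFinset x).erase v).card ≤ 3 := by
      have := Finset.card_erase_of_mem hvm
      have h4 : (G.neighborFinset x).card ≤ 4 := by rw [← gdeg_eq_card]; exact hΔ x
      omega
    exact key_ext _ v (Finset.notMem_erase _ _) hc ψ
  choose F hF1 hF2 using hkey
  let Forb : Finset ℕ :=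
    (G.neighborFinset v).attach.biUnion (fun x => insert (ψ (x : V)) (F (x : V) x.2))
  have hForb : Forb.card < (L v).card := by
    have h1 : Forb.card ≤
        ∑ x ∈ (G.neighborFinset v).attach, (insert (ψ (x : V)) (F (x : V) x.2)).card :=
      Finset.card_biUnion_le
    have h2 : ∀ x ∈ (G.neighborFinset v).attach,
        (insert (ψ (x : V)) (F (x : V) x.2)).card ≤ 2 := by
      intro x _
      have ha := hF1 (x : V) x.2
      have hb := Finset.card_insert_le (ψ (x : V)) (F (x : V) x.2)
      omega
    have h3 : Forb.card ≤ 2 * (G.neighborFinset v).card := by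
      calc Forb.card ≤ _ := h1
      _ ≤ ∑ _x ∈ (G.neighborFinset v).attach, 2 := Finset.sum_le_sum h2
      _ = 2 * (G.neighborFinset v).card := by rw [Finset.sum_const, Finset.card_attach]; ring
    have h4 := hL v
    rw [gdeg_eq_card] at h4
    omega
  obtain ⟨a, haL, haF⟩ : ∃ a ∈ L v, a ∉ Forb := by
    by_contra hcon
    push_neg at hcon
    have := Finset.card_le_card hcon
    omega
  have haψ : ∀ x ∈ G.neighborFinset v, a ≠ ψ x := by
    intro x hx he
    exact haF (Finset.mem_biUnion.mpr ⟨⟨x, hx⟩, Finset.mem_attach _ _,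
      he ▸ Finset.mem_insert_self _ _⟩)
  have haFx : ∀ (x : V) (hx : x ∈ G.neighborFinset v), a ∉ F x hx := by
    intro x hx hmem
    exact haF (Finset.mem_biUnion.mpr ⟨⟨x, hx⟩, Finset.mem_attach _ _,
      Finset.mem_insert_of_mem hmem⟩)
  set φ : V → ℕ := Function.update ψ v a with hφdef
  have hφv : φ v = a := Function.update_self _ _ _
  have hφne : ∀ (u : V), u ≠ v → φ u = ψ u := fun u h => Function.update_of_ne h _ _
  refine hno ⟨φ, ?_, ?_, ?_⟩
  · -- list condition
    intro u
    by_cases h : u = v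
    · subst h; rwa [hφv]
    · rw [hφne u h, hψeq u h]; exact hφ'L ⟨u, h⟩
  · -- proper
    intro u w huw
    by_cases hu : u = v
    · subst hu
      have hwv : w ≠ u := G.ne_of_adj huw.symm
      rw [hφv, hφne w hwv]
      exact haψ w ((mem_neighborFinset _ _ _).mpr huw)
    · by_cases hw : w = v
      · subst hw
        have hne := haψ u ((mem_neighborFinset _ _ _).mpr huw.symm)
        rw [hφv, hφne u hu]
        exact fun e => hne e.symm
      · rw [hφne u hu, hφne w hw, hψeq u hu, hψeq w hw]
        exact hφ'prop (Or.inl huw)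
  · -- conflict-free
    intro x hx
    obtain ⟨w0, hw0⟩ := hx
    by_cases hxv : x = v
    · subst hxv
      refine ⟨φ w0, w0, ⟨hw0, rfl⟩, ?_⟩
      rintro u' ⟨hu', he⟩
      by_contra hne
      have hu'v : u' ≠ x := G.ne_of_adj hu'.symm
      have hw0v : w0 ≠ x := G.ne_of_adj hw0.symm
      have hadj : G'.Adj ⟨u', hu'v⟩ ⟨w0, hw0v⟩ := Or.inr ⟨hne, hu', hw0⟩
      apply hφ'prop hadj
      rw [← hψeq u' hu'v, ← hψeq w0 hw0v, ← hφne u' hu'v, ← hφne w0 hw0v, he]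
    · by_cases hxN : G.Adj v x
      · -- x is a neighbor of v: use the key extension lemma
        have hxN' : x ∈ G.neighborFinset v := (mem_neighborFinset _ _ _).mpr hxN
        obtain ⟨c, w, ⟨hwmem, hwc⟩, hwuniq⟩ := hF2 x hxN' a (haFx x hxN')
        have hins : insert v ((G.neighborFinset x).erase v) = G.neighborFinset x :=
          Finset.insert_erase ((mem_neighborFinset _ _ _).mpr hxN.symm)
        rw [hins] at hwmem
        refine ⟨c, w, ⟨(mem_neighborFinset _ _ _).mp hwmem, hwc⟩, ?_⟩
        rintro y ⟨hy, hyc⟩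
        refine hwuniq y ⟨?_, hyc⟩
        rw [hins]
        exact (mem_neighborFinset _ _ _).mpr hy
      · -- x not adjacent to v: transfer from G'
        have hw0v : w0 ≠ v := fun e => hxN (e ▸ hw0).symm
        obtain ⟨c, b0, ⟨hb0adj, hb0c⟩, hb0uniq⟩ :=
          hφ'cf ⟨x, hxv⟩ ⟨⟨w0, hw0v⟩, Or.inl hw0⟩
        have htr : ∀ b : W, G'.Adj ⟨x, hxv⟩ b ↔ G.Adj x (b : V) := by
          intro b
          constructor
          · rintro (h | ⟨_, h1, _⟩)
            · exact h
            · exact absurd h1 hxN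
          · exact fun h => Or.inl h
        refine ⟨c, (b0 : V), ⟨(htr b0).mp hb0adj, ?_⟩, ?_⟩
        · rw [hφne _ b0.2, hψeq _ b0.2]
          exact hb0c
        · rintro y ⟨hy, hyc⟩
          have hyv : y ≠ v := fun e => hxN (e ▸ hy).symm
          have heq : (⟨y, hyv⟩ : W) = b0 := by
            apply hb0uniq
            refine ⟨(htr _).mpr hy, ?_⟩
            rw [← hψeq y hyv, ← hφne y hyv]
            exact hyc
          exact congrArg Subtype.val heq
end

section
/- Let C = x z y w x be a 4-cycle and suppose each vertex v of C blocks at most two color pairs, with the property that if v blocks two pairs (α_1,β_1) and (α_2,β_2) then α_1 = β_2 ≠ α_2 = β_1. If L'(x) and L'(y) are nonempty finite sets of colors with |L'(x)| + |L'(y)| ≥ 4, then there exists a pair (α,β) ∈ L'(x) × L'(y) which is blocked by neither z nor w. -/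
open SimpleGraph

/-- No two distinct pairs in a symmetric blocker share a first coordinate. -/
lemma blk_row {B : Finset (ℕ × ℕ)}
    (hB : ∀ p ∈ B, ∀ q ∈ B, p ≠ q → p.1 = q.2 ∧ p.2 = q.1 ∧ p.1 ≠ p.2)
    {x y y' : ℕ} (hy : y ≠ y') (h : (x, y) ∈ B) (h' : (x, y') ∈ B) : False := by
  have hne : (x, y) ≠ (x, y') := by simp [hy]
  obtain ⟨e1, e2, e3⟩ := hB _ h _ h' hne
  simp only at e1 e2 e3
  exact hy (e2.trans e1)

/-- No two distinct pairs in a symmetric blocker share a second coordinate. -/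
lemma blk_col {B : Finset (ℕ × ℕ)}
    (hB : ∀ p ∈ B, ∀ q ∈ B, p ≠ q → p.1 = q.2 ∧ p.2 = q.1 ∧ p.1 ≠ p.2)
    {x x' y : ℕ} (hx : x ≠ x') (h : (x, y) ∈ B) (h' : (x', y) ∈ B) : False := by
  have hne : (x, y) ≠ (x', y) := by simp [hx]
  obtain ⟨e1, e2, e3⟩ := hB _ h _ h' hne
  simp only at e1 e2 e3
  exact e3 e1

lemma blk_core {a b c d : ℕ} (hab : a ≠ b) (hcd : c ≠ d)
    {B1 B2 : Finset (ℕ × ℕ)}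
    (h1 : ∀ p ∈ B1, ∀ q ∈ B1, p ≠ q → p.1 = q.2 ∧ p.2 = q.1 ∧ p.1 ≠ p.2)
    (h2 : ∀ p ∈ B2, ∀ q ∈ B2, p ≠ q → p.1 = q.2 ∧ p.2 = q.1 ∧ p.1 ≠ p.2)
    (m1 : (a, c) ∈ B1) (m4 : (b, d) ∈ B1)
    (m2 : (a, d) ∈ B2) (m3 : (b, c) ∈ B2) : False := by
  have hne : (a, c) ≠ (b, d) := by simp [hab]
  obtain ⟨e1, e2, e3⟩ := h1 _ m1 _ m4 hne
  simp only at e1 e2 e3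
  -- e1 : a = d, e2 : c = b, e3 : a ≠ c
  subst e1; subst e2
  -- now m2 : (a, a) ∈ B2, m3 : (c, c) ∈ B2
  have hne2 : ((a : ℕ), a) ≠ (c, c) := by simp [e3]
  obtain ⟨f1, f2, f3⟩ := h2 _ m2 _ m3 hne2
  exact f3 rfl

/-- if z and w each block at most two (symmetric, crossing) color pairs,
and |L'(x)| + |L'(y)| ≥ 4 with both nonempty, then some pair in L'(x) × L'(y) is blocked
by neither z nor w. -/
theorem exists_feasible_pair (Bz Bw : Finset (ℕ × ℕ))
    (hBz2 : Bz.card ≤ 2) (hBw2 : Bw.card ≤ 2)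
    (hBz : ∀ p ∈ Bz, ∀ q ∈ Bz, p ≠ q → p.1 = q.2 ∧ p.2 = q.1 ∧ p.1 ≠ p.2)
    (hBw : ∀ p ∈ Bw, ∀ q ∈ Bw, p ≠ q → p.1 = q.2 ∧ p.2 = q.1 ∧ p.1 ≠ p.2)
    (Lx Ly : Finset ℕ) (hx : Lx.Nonempty) (hy : Ly.Nonempty)
    (hcard : 4 ≤ Lx.card + Ly.card) :
    ∃ α ∈ Lx, ∃ β ∈ Ly, (α, β) ∉ Bz ∧ (α, β) ∉ Bw := by
  by_contra hcon
  push_neg at hcon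
  have hall : ∀ α ∈ Lx, ∀ β ∈ Ly, (α, β) ∈ Bz ∨ (α, β) ∈ Bw := by
    intro α hα β hβ
    by_cases h : (α, β) ∈ Bz
    · exact Or.inl h
    · exact Or.inr (hcon α hα β hβ h)
  rcases lt_or_ge 2 Lx.card with h3x | h2x
  · -- |Lx| ≥ 3 : fix β ∈ Ly, pigeonhole on first coordinates
    obtain ⟨β, hβ⟩ := hy
    obtain ⟨a, ha, b, hb, c, hc, hab, hac, hbc⟩ := Finset.two_lt_card.mp h3x
    have Ha := hall a ha β hβ
    have Hb := hall b hb β hβ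
    have Hc := hall c hc β hβ
    rcases Ha with Ha | Ha <;> rcases Hb with Hb | Hb <;> rcases Hc with Hc | Hc <;>
      first
      | exact blk_col hBz hab Ha Hb | exact blk_col hBw hab Ha Hb
      | exact blk_col hBz hac Ha Hc | exact blk_col hBw hac Ha Hc
      | exact blk_col hBz hbc Hb Hc | exact blk_col hBw hbc Hb Hc
  rcases lt_or_ge 2 Ly.card with h3y | h2y
  · -- |Ly| ≥ 3 : fix α ∈ Lx, pigeonhole on second coordinates
    obtain ⟨α, hα⟩ := hx
    obtain ⟨a, ha, b, hb, c, hc, hab, hac, hbc⟩ := Finset.two_lt_card.mp h3y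
    have Ha := hall α hα a ha
    have Hb := hall α hα b hb
    have Hc := hall α hα c hc
    rcases Ha with Ha | Ha <;> rcases Hb with Hb | Hb <;> rcases Hc with Hc | Hc <;>
      first
      | exact blk_row hBz hab Ha Hb | exact blk_row hBw hab Ha Hb
      | exact blk_row hBz hac Ha Hc | exact blk_row hBw hac Ha Hc
      | exact blk_row hBz hbc Hb Hc | exact blk_row hBw hbc Hb Hc
  -- now |Lx| = |Ly| = 2
  have hx2 : Lx.card = 2 := by
    have := Finset.card_pos.mpr hx
    have := Finset.card_pos.mpr hy
    omega
  have hy2 : Ly.card = 2 := by omega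
  obtain ⟨a, b, hab, hLx⟩ := Finset.card_eq_two.mp hx2
  obtain ⟨c, d, hcd, hLy⟩ := Finset.card_eq_two.mp hy2
  have ha : a ∈ Lx := by simp [hLx]
  have hb : b ∈ Lx := by simp [hLx]
  have hc : c ∈ Ly := by simp [hLy]
  have hd : d ∈ Ly := by simp [hLy]
  have H1 := hall a ha c hc
  have H2 := hall a ha d hd
  have H3 := hall b hb c hc
  have H4 := hall b hb d hd
  rcases H1 with H1 | H1 <;> rcases H2 with H2 | H2 <;> rcases H3 with H3 | H3 <;>
      rcases H4 with H4 | H4 <;>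
    first
    | exact blk_row hBz hcd H1 H2 | exact blk_row hBw hcd H1 H2
    | exact blk_row hBz hcd H3 H4 | exact blk_row hBw hcd H3 H4
    | exact blk_col hBz hab H1 H3 | exact blk_col hBw hab H1 H3
    | exact blk_col hBz hab H2 H4 | exact blk_col hBw hab H2 H4
    | exact blk_core hab hcd hBz hBw H1 H4 H2 H3
    | exact blk_core hab hcd hBw hBz H1 H4 H2 H3
end
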